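/- arXiv:1810.08730 — 2 statements merged into one kernel-verified Lean document; each statement's English description precedes it below -/
import Mathlib

section
/- Let p > 1 and 1 < q < p with gcd(p,q) = 1, and let (a,b) satisfy a·q - b·p = 1 with 0 < a ≤ p, 0 < b ≤ q. Let d be a positive integer such that p divides d² and p divides (q-a)·d. Then for every integer n, gcd(p, q + n·d) = 1. -/
/-- `a - n * d` is an inverse of `q + n * d` modulo `p`, since
`(a - n d)(q + n d) = a q - n (q - a) d - n² d²`. -/
theorem isCoprime_add_mul_of_bezout {R : Type*} [CommRing R] {p q a b d : R}
    (hbez : a * q - b * p = 1) (hd2 : p ∣ d ^ 2) (hqad : p ∣ (q - a) * d) (n : R) :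
    IsCoprime p (q + n * d) := by
  obtain ⟨s, hs⟩ := hd2
  obtain ⟨t, ht⟩ := hqad
  exact ⟨n * t + n ^ 2 * s - b, a - n * d, by linear_combination hbez - n * ht - n ^ 2 * hs⟩

theorem stmt_3_general (p q a b d : ℤ)
    (hbez : a * q - b * p = 1)
    (hd2 : p ∣ d ^ 2) (hqad : p ∣ (q - a) * d) :
    ∀ n : ℤ, Int.gcd p (q + n * d) = 1 := fun n =>
  Int.isCoprime_iff_gcd_eq_one.mp (isCoprime_add_mul_of_bezout hbez hd2 hqad n)

theorem stmt_3 (p q a b d : ℤ) (hp : 1 < p) (hq : 1 < q) (hqp : q < p)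
    (hcop : Int.gcd p q = 1)
    (ha : 0 < a) (hap : a ≤ p) (hb : 0 < b) (hbq : b ≤ q)
    (hbez : a * q - b * p = 1)
    (hd : 0 < d) (hd2 : p ∣ d ^ 2) (hqad : p ∣ (q - a) * d) :
    ∀ n : ℤ, Int.gcd p (q + n * d) = 1 :=
  stmt_3_general p q a b d hbez hd2 hqad
end

section
/- Let p > 1 and 1 < q < p with gcd(p,q) = 1, and let (a,b) = B₁(p,q) and d an integer with p | d² and p | (q-a)·d. If additionally 1 < q + n·d < p for some integer n, then B₁(p, q+n·d) = (a - n·d, b - ((q-a)/p)·(n·d) - (n·d)²/p), provided 0 < a - n·d ≤ p and 0 < b - ((q-a)/p)·(n·d) - (n·d)²/p ≤ q + n·d. -/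
theorem stmt_19 (p q a b d n : ℤ) (hp : 1 < p) (hq : 1 < q) (hqp : q < p)
    (hcop : Int.gcd p q = 1)
    (ha : 0 < a) (hap : a ≤ p) (hb : 0 < b) (hbq : b ≤ q)
    (hbez : a * q - b * p = 1)
    (hd2 : p ∣ d ^ 2) (hqad : p ∣ (q - a) * d)
    (hrange : 1 < q + n * d ∧ q + n * d < p)
    (hx : 0 < a - n * d ∧ a - n * d ≤ p)
    (hy : 0 < b - ((q - a) * (n * d)) / p - (n * d) ^ 2 / p ∧
      b - ((q - a) * (n * d)) / p - (n * d) ^ 2 / p ≤ q + n * d) :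
    (a - n * d) * (q + n * d) -
      (b - ((q - a) * (n * d)) / p - (n * d) ^ 2 / p) * p = 1 := by
  have hp0 : p ≠ 0 := by omega
  obtain ⟨k, hk⟩ := hqad
  obtain ⟨m, hm⟩ := hd2
  have e1 : (q - a) * (n * d) = p * (n * k) := by rw [mul_comm n d, ← mul_assoc, hk]; ring
  have e2 : (n * d) ^ 2 = p * (n ^ 2 * m) := by
    have : (n * d) ^ 2 = n ^ 2 * d ^ 2 := by ring
    rw [this, hm]; ring
  rw [e1, e2, Int.mul_ediv_cancel_left _ hp0, Int.mul_ediv_cancel_left _ hp0]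
  linear_combination hbez - n * hk + (-(n^2)) * hm
end
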